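/- For all antisymmetric A, B : Fin 5 → Fin 5 → ℝ and all μ, ν, ρ ∈ Fin 5: Σ_{α,β,γ} ε_{νραβγ} (A_μ{}^α B^{βγ} + A^{αβ} B_μ{}^γ) + (1/2) Σ_{α,β,γ,δ} (η_{μν} ε_{ραβγδ} − η_{μρ} ε_{ναβγδ}) A^{αβ} B^{γδ} = 0. -/
import Mathlib

noncomputable section

/-- The mostly-minus Minkowski metric η = diag(1,−1,−1,−1,−1) (equal to its own inverse). -/
def etaR (μ ν : Fin 5) : ℝ := if μ = ν then (if μ = 0 then 1 else -1) else 0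

/-- The Levi-Civita symbol on Fin 5 (ε_{01234} = 1). -/
def epsR (μ ν ρ σ τ : Fin 5) : ℝ :=
  if h : Function.Bijective ![μ, ν, ρ, σ, τ] then
    ((Equiv.Perm.sign (Equiv.ofBijective _ h) : ℤ) : ℝ)
  else 0

/-- A computable permutation with the same underlying function. -/
def permOf (f : Fin 5 → Fin 5) (h : Function.Bijective f) : Equiv.Perm (Fin 5) :=
  ⟨f, Fintype.bijInv h, Fintype.leftInverse_bijInv h, Fintype.rightInverse_bijInv h⟩

/-- Integer-valued Levi-Civita symbol (computable). -/
def epsZ (μ ν ρ σ τ : Fin 5) : ℤ :=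
  if h : Function.Bijective ![μ, ν, ρ, σ, τ] then Equiv.Perm.sign (permOf _ h) else 0

def etaZ (μ ν : Fin 5) : ℤ := if μ = ν then (if μ = 0 then 1 else -1) else 0

def sgn (a b : Fin 5) : ℤ := if a < b then 1 else if b < a then -1 else 0

/-- Fast product-of-signs formula for the Levi-Civita symbol. -/
def epsP (μ ν ρ σ τ : Fin 5) : ℤ :=
  sgn μ ν * sgn μ ρ * sgn μ σ * sgn μ τ * sgn ν ρ * sgn ν σ * sgn ν τ *
    sgn ρ σ * sgn ρ τ * sgn σ τ

set_option maxRecDepth 100000 in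
set_option maxHeartbeats 4000000 in
lemma epsZ_eq_epsP : ∀ μ ν ρ σ τ : Fin 5, epsZ μ ν ρ σ τ = epsP μ ν ρ σ τ := by decide

set_option maxRecDepth 100000 in
set_option maxHeartbeats 12000000 in
lemma keyP : ∀ μ ν ρ α β γ δ : Fin 5,
    etaZ μ ν * epsP ρ α β γ δ - etaZ μ ρ * epsP ν α β γ δ
    + etaZ μ α * epsP ν ρ β γ δ - etaZ μ β * epsP ν ρ α γ δ
    + etaZ μ γ * epsP ν ρ α β δ - etaZ μ δ * epsP ν ρ α β γ = 0 := by decide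

lemma epsR_eqP (μ ν ρ σ τ : Fin 5) : epsR μ ν ρ σ τ = ((epsP μ ν ρ σ τ : ℤ) : ℝ) := by
  rw [← epsZ_eq_epsP]
  unfold epsR epsZ
  split
  · rename_i h
    rw [show Equiv.ofBijective _ h = permOf _ h from Equiv.ext fun _ => rfl]
  · simp

lemma etaR_eqZ (μ ν : Fin 5) : etaR μ ν = ((etaZ μ ν : ℤ) : ℝ) := by
  unfold etaR etaZ; split_ifs <;> simp

lemma keyR (μ ν ρ α β γ δ : Fin 5) :
    etaR μ ν * epsR ρ α β γ δ - etaR μ ρ * epsR ν α β γ δ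
    + etaR μ α * epsR ν ρ β γ δ - etaR μ β * epsR ν ρ α γ δ
    + etaR μ γ * epsR ν ρ α β δ - etaR μ δ * epsR ν ρ α β γ = 0 := by
  simp only [epsR_eqP, etaR_eqZ]
  exact_mod_cast keyP μ ν ρ α β γ δ

lemma eta_sq (μ : Fin 5) : etaR μ μ * etaR μ μ = 1 := by
  unfold etaR; rw [if_pos rfl]; split_ifs <;> norm_num

lemma etaR_ne {μ b : Fin 5} (h : b ≠ μ) : etaR μ b = 0 := by
  unfold etaR; rw [if_neg fun hh => h hh.symm]

lemma contract1 (μ : Fin 5) (g : Fin 5 → ℝ) :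
    ∑ α, etaR μ α * etaR α α * g α = g μ := by
  rw [Finset.sum_eq_single μ]
  · rw [eta_sq, one_mul]
  · intro b _ hb
    rw [etaR_ne hb, zero_mul, zero_mul]
  · intro h; exact absurd (Finset.mem_univ μ) h

/-- Tensor identity (A.3):
    ε_{νραβγ} (A_μ{}^α B^{βγ} + A^{αβ} B_μ{}^γ)
      + (1/2)(η_{μν} ε_{ραβγδ} − η_{μρ} ε_{ναβγδ}) A^{αβ} B^{γδ} = 0. -/
theorem tensor_id_AB_three (A B : Fin 5 → Fin 5 → ℝ)
    (hA : ∀ μ ν, A μ ν = - A ν μ) (hB : ∀ μ ν, B μ ν = - B ν μ)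
    (μ ν ρ : Fin 5) :
    ∑ α, ∑ β, ∑ γ,
        epsR ν ρ α β γ *
          ((etaR α α * A μ α) * (etaR β β * etaR γ γ * B β γ)
            + (etaR α α * etaR β β * A α β) * (etaR γ γ * B μ γ))
    + (1/2 : ℝ) * ∑ α, ∑ β, ∑ γ, ∑ δ,
        (etaR μ ν * epsR ρ α β γ δ - etaR μ ρ * epsR ν α β γ δ)
          * (etaR α α * etaR β β * A α β) * (etaR γ γ * etaR δ δ * B γ δ) = 0 := by
  -- contraction of the key identity with A and B
  have hsum : ∑ α, ∑ β, ∑ γ, ∑ δ,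
      (etaR μ ν * epsR ρ α β γ δ - etaR μ ρ * epsR ν α β γ δ
       + etaR μ α * epsR ν ρ β γ δ - etaR μ β * epsR ν ρ α γ δ
       + etaR μ γ * epsR ν ρ α β δ - etaR μ δ * epsR ν ρ α β γ)
        * (etaR α α * etaR β β * A α β) * (etaR γ γ * etaR δ δ * B γ δ) = 0 := by
    refine Finset.sum_eq_zero fun α _ => Finset.sum_eq_zero fun β _ =>
      Finset.sum_eq_zero fun γ _ => Finset.sum_eq_zero fun δ _ => ?_
    rw [keyR]; ring
  -- split into six quadruple sums
  have expand : ∑ α, ∑ β, ∑ γ, ∑ δ,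
      (etaR μ ν * epsR ρ α β γ δ - etaR μ ρ * epsR ν α β γ δ
       + etaR μ α * epsR ν ρ β γ δ - etaR μ β * epsR ν ρ α γ δ
       + etaR μ γ * epsR ν ρ α β δ - etaR μ δ * epsR ν ρ α β γ)
        * (etaR α α * etaR β β * A α β) * (etaR γ γ * etaR δ δ * B γ δ)
    = (∑ α, ∑ β, ∑ γ, ∑ δ, (etaR μ ν * epsR ρ α β γ δ - etaR μ ρ * epsR ν α β γ δ)
          * (etaR α α * etaR β β * A α β) * (etaR γ γ * etaR δ δ * B γ δ))
      + (∑ α, ∑ β, ∑ γ, ∑ δ, etaR μ α * epsR ν ρ β γ δ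
          * (etaR α α * etaR β β * A α β) * (etaR γ γ * etaR δ δ * B γ δ))
      - (∑ α, ∑ β, ∑ γ, ∑ δ, etaR μ β * epsR ν ρ α γ δ
          * (etaR α α * etaR β β * A α β) * (etaR γ γ * etaR δ δ * B γ δ))
      + (∑ α, ∑ β, ∑ γ, ∑ δ, etaR μ γ * epsR ν ρ α β δ
          * (etaR α α * etaR β β * A α β) * (etaR γ γ * etaR δ δ * B γ δ))
      - (∑ α, ∑ β, ∑ γ, ∑ δ, etaR μ δ * epsR ν ρ α β γ
          * (etaR α α * etaR β β * A α β) * (etaR γ γ * etaR δ δ * B γ δ)) := by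
    simp only [← Finset.sum_add_distrib, ← Finset.sum_sub_distrib]
    refine Finset.sum_congr rfl fun α _ => Finset.sum_congr rfl fun β _ =>
      Finset.sum_congr rfl fun γ _ => Finset.sum_congr rfl fun δ _ => by ring
  -- T3 = P1
  have hT3 : ∑ α, ∑ β, ∑ γ, ∑ δ, etaR μ α * epsR ν ρ β γ δ
        * (etaR α α * etaR β β * A α β) * (etaR γ γ * etaR δ δ * B γ δ)
      = ∑ α, ∑ β, ∑ γ, epsR ν ρ α β γ * (etaR α α * A μ α)
          * (etaR β β * etaR γ γ * B β γ) := by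
    have h1 : ∑ α, ∑ β, ∑ γ, ∑ δ, etaR μ α * epsR ν ρ β γ δ
        * (etaR α α * etaR β β * A α β) * (etaR γ γ * etaR δ δ * B γ δ)
      = ∑ α, etaR μ α * etaR α α *
          (∑ b, ∑ c, ∑ d, epsR ν ρ b c d * (etaR b b * A α b)
            * (etaR c c * etaR d d * B c d)) := by
      refine Finset.sum_congr rfl fun α _ => ?_
      simp only [Finset.mul_sum]
      refine Finset.sum_congr rfl fun b _ => Finset.sum_congr rfl fun c _ =>
        Finset.sum_congr rfl fun d _ => by ring
    rw [h1]
    exact contract1 μ (fun x => ∑ b, ∑ c, ∑ d, epsR ν ρ b c d * (etaR b b * A x b)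
      * (etaR c c * etaR d d * B c d))
  -- T4 = -P1
  have hT4 : ∑ α, ∑ β, ∑ γ, ∑ δ, etaR μ β * epsR ν ρ α γ δ
        * (etaR α α * etaR β β * A α β) * (etaR γ γ * etaR δ δ * B γ δ)
      = -∑ α, ∑ β, ∑ γ, epsR ν ρ α β γ * (etaR α α * A μ α)
          * (etaR β β * etaR γ γ * B β γ) := by
    have h1 : ∀ α : Fin 5, ∑ β, ∑ γ, ∑ δ, etaR μ β * epsR ν ρ α γ δ
        * (etaR α α * etaR β β * A α β) * (etaR γ γ * etaR δ δ * B γ δ)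
      = ∑ β, etaR μ β * etaR β β *
          (∑ c, ∑ d, epsR ν ρ α c d * (etaR α α * A α β)
            * (etaR c c * etaR d d * B c d)) := by
      intro α
      refine Finset.sum_congr rfl fun β _ => ?_
      simp only [Finset.mul_sum]
      refine Finset.sum_congr rfl fun c _ => Finset.sum_congr rfl fun d _ => by ring
    have h2 : ∀ α : Fin 5, ∑ β, etaR μ β * etaR β β *
          (∑ c, ∑ d, epsR ν ρ α c d * (etaR α α * A α β)
            * (etaR c c * etaR d d * B c d))
        = ∑ c, ∑ d, epsR ν ρ α c d * (etaR α α * A α μ)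
            * (etaR c c * etaR d d * B c d) := fun α =>
      contract1 μ (fun x => ∑ c, ∑ d, epsR ν ρ α c d * (etaR α α * A α x)
        * (etaR c c * etaR d d * B c d))
    rw [← Finset.sum_neg_distrib]
    refine Finset.sum_congr rfl fun α _ => ?_
    rw [h1 α, h2 α, ← Finset.sum_neg_distrib]
    refine Finset.sum_congr rfl fun b _ => ?_
    rw [← Finset.sum_neg_distrib]
    refine Finset.sum_congr rfl fun c _ => ?_
    rw [hA α μ]; ring
  -- T5 = P2
  have hT5 : ∑ α, ∑ β, ∑ γ, ∑ δ, etaR μ γ * epsR ν ρ α β δ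
        * (etaR α α * etaR β β * A α β) * (etaR γ γ * etaR δ δ * B γ δ)
      = ∑ α, ∑ β, ∑ γ, epsR ν ρ α β γ * (etaR α α * etaR β β * A α β)
          * (etaR γ γ * B μ γ) := by
    refine Finset.sum_congr rfl fun α _ => Finset.sum_congr rfl fun β _ => ?_
    have h1 : ∑ γ, ∑ δ, etaR μ γ * epsR ν ρ α β δ
        * (etaR α α * etaR β β * A α β) * (etaR γ γ * etaR δ δ * B γ δ)
      = ∑ γ, etaR μ γ * etaR γ γ *
          (∑ d, epsR ν ρ α β d * (etaR α α * etaR β β * A α β)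
            * (etaR d d * B γ d)) := by
      refine Finset.sum_congr rfl fun γ _ => ?_
      simp only [Finset.mul_sum]
      refine Finset.sum_congr rfl fun d _ => by ring
    rw [h1]
    rw [contract1 μ (fun x => ∑ d, epsR ν ρ α β d * (etaR α α * etaR β β * A α β)
      * (etaR d d * B x d))]
  -- T6 = -P2
  have hT6 : ∑ α, ∑ β, ∑ γ, ∑ δ, etaR μ δ * epsR ν ρ α β γ
        * (etaR α α * etaR β β * A α β) * (etaR γ γ * etaR δ δ * B γ δ)
      = -∑ α, ∑ β, ∑ γ, epsR ν ρ α β γ * (etaR α α * etaR β β * A α β)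
          * (etaR γ γ * B μ γ) := by
    rw [← Finset.sum_neg_distrib]
    refine Finset.sum_congr rfl fun α _ => ?_
    rw [← Finset.sum_neg_distrib]
    refine Finset.sum_congr rfl fun β _ => ?_
    rw [← Finset.sum_neg_distrib]
    refine Finset.sum_congr rfl fun γ _ => ?_
    have h1 : ∑ δ, etaR μ δ * epsR ν ρ α β γ
        * (etaR α α * etaR β β * A α β) * (etaR γ γ * etaR δ δ * B γ δ)
      = ∑ δ, etaR μ δ * etaR δ δ *
          (epsR ν ρ α β γ * (etaR α α * etaR β β * A α β) * (etaR γ γ * B γ δ)) := by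
      refine Finset.sum_congr rfl fun δ _ => by ring
    rw [h1, contract1 μ (fun x => epsR ν ρ α β γ * (etaR α α * etaR β β * A α β)
      * (etaR γ γ * B γ x)), hB γ μ]
    ring
  -- split the goal's first triple sum into P1 + P2
  have hgoal1 : ∑ α, ∑ β, ∑ γ,
        epsR ν ρ α β γ *
          ((etaR α α * A μ α) * (etaR β β * etaR γ γ * B β γ)
            + (etaR α α * etaR β β * A α β) * (etaR γ γ * B μ γ))
      = (∑ α, ∑ β, ∑ γ, epsR ν ρ α β γ * (etaR α α * A μ α)
          * (etaR β β * etaR γ γ * B β γ))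
        + (∑ α, ∑ β, ∑ γ, epsR ν ρ α β γ * (etaR α α * etaR β β * A α β)
          * (etaR γ γ * B μ γ)) := by
    simp only [← Finset.sum_add_distrib]
    refine Finset.sum_congr rfl fun α _ => Finset.sum_congr rfl fun β _ =>
      Finset.sum_congr rfl fun γ _ => by ring
  rw [expand, hT3, hT4, hT5, hT6] at hsum
  rw [hgoal1]
  linarith [hsum]
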